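/- Let P ⊂ ℝ^d be a pointed d-polyhedron with vertex at the origin, and let c ∈ ℝ^d satisfy ⟨c,x⟩ > 0 for all x ∈ P \ {0}. Suppose the projective image f(P) with f(x) = x/(⟨c,x⟩+1) satisfies f(P) = {x : p_i(x) ≥ 0 for i ∈ I, ⟨c,x⟩ < 1}. Then there exist polynomials p̃_i (obtained by multiplying p_i(f(x)) by suitable powers of ⟨c,x⟩+1) such that P = {x ∈ ℝ^d : p̃_i(x) ≥ 0 for i ∈ I, ⟨c,x⟩ ≥ 0}. In particular m_P(P) ≤ |I| + 1. -/

import Mathlib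

/-!
Since `⟨c, x⟩ ≥ 0` on `P`, the projective map `f` is injective on `{x | ⟨c, x⟩ + 1 > 0}` and
`⟨c, f x⟩ = 1 - (⟨c, x⟩ + 1)⁻¹ < 1` there, so `P` is cut out by `⟨c, x⟩ ≥ 0` together with the
inequalities `pᵢ (f x) ≥ 0`. Multiplying `pᵢ (f x)` by the positive factor
`(⟨c, x⟩ + 1) ^ deg pᵢ` makes these polynomial: homogenize `pᵢ` and substitute `⟨c, x⟩ + 1` for
the homogenizing variable.
-/

/-- The minimal number of polynomials in a `P`-representation. -/
noncomputable def mP (d : ℕ) (P : Set (Fin d → ℝ)) : ℕ :=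
  sInf {l : ℕ | ∃ p : Fin l → MvPolynomial (Fin d) ℝ,
    P = {x : Fin d → ℝ | ∀ j, 0 ≤ MvPolynomial.eval x (p j)}}

namespace MvPolynomial

variable {σ K : Type*}

theorem IsHomogeneous.eval_smul [CommSemiring K] {φ : MvPolynomial σ K} {n : ℕ}
    (hφ : φ.IsHomogeneous n) (t : K) (x : σ → K) :
    eval (t • x) φ = t ^ n * eval x φ := by
  simp only [eval_eq, Finset.mul_sum]
  refine Finset.sum_congr rfl fun d hd => ?_
  simp only [Pi.smul_apply, smul_eq_mul, mul_pow, Finset.prod_mul_distrib,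
    Finset.prod_pow_eq_pow_sum, ← hφ.degree_eq_sum_deg_support hd]
  ring

variable [Field K]

noncomputable def homogenizeWith (q ℓ : MvPolynomial σ K) : MvPolynomial σ K :=
  ∑ i ∈ Finset.range (q.totalDegree + 1), homogeneousComponent i q * ℓ ^ (q.totalDegree - i)

theorem eval_homogenizeWith (q ℓ : MvPolynomial σ K) {x : σ → K} (hx : eval x ℓ ≠ 0) :
    eval x (q.homogenizeWith ℓ) = eval x ℓ ^ q.totalDegree * eval ((eval x ℓ)⁻¹ • x) q := by
  conv_rhs => arg 2; rw [← sum_homogeneousComponent q]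
  simp only [homogenizeWith, map_sum, map_mul, map_pow, Finset.mul_sum,
    (homogeneousComponent_isHomogeneous _ q).eval_smul]
  refine Finset.sum_congr rfl fun i hi => ?_
  rw [pow_sub₀ _ hx (Nat.lt_succ_iff.mp (Finset.mem_range.mp hi)), inv_pow]
  ring

end MvPolynomial

section ProjectiveMap

variable {K E : Type*} [Field K] [AddCommGroup E] [Module K E] (ℓ : E →ₗ[K] K)

theorem inv_add_one_eq_one_sub_apply_smul {x : E} (hx : ℓ x + 1 ≠ 0) :
    (ℓ x + 1)⁻¹ = 1 - ℓ ((ℓ x + 1)⁻¹ • x) := by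
  rw [map_smul, smul_eq_mul]
  field_simp
  ring

theorem injOn_inv_add_one_smul :
    Set.InjOn (fun x => (ℓ x + 1)⁻¹ • x) {x | ℓ x + 1 ≠ 0} := by
  intro x hx y hy hxy
  have hscale : ℓ x + 1 = ℓ y + 1 := by
    rw [← inv_inj, inv_add_one_eq_one_sub_apply_smul ℓ hx,
      inv_add_one_eq_one_sub_apply_smul ℓ hy]
    exact congrArg (1 - ℓ ·) hxy
  calc x = (ℓ x + 1) • (ℓ x + 1)⁻¹ • x := (smul_inv_smul₀ hx x).symm
    _ = (ℓ x + 1) • (ℓ y + 1)⁻¹ • y := congrArg _ hxy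
    _ = y := by rw [hscale, smul_inv_smul₀ hy]

variable [LinearOrder K] [IsStrictOrderedRing K]

theorem apply_inv_add_one_smul_lt_one {x : E} (hx : 0 < ℓ x + 1) :
    ℓ ((ℓ x + 1)⁻¹ • x) < 1 := by
  have := inv_add_one_eq_one_sub_apply_smul ℓ hx.ne'
  linarith [inv_pos.mpr hx]

theorem eq_setOf_of_image_inv_add_one_smul_eq {P Q : Set E} (hP : ∀ x ∈ P, 0 ≤ ℓ x)
    (himage : (fun x => (ℓ x + 1)⁻¹ • x) '' P = Q ∩ {y | ℓ y < 1}) :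
    P = {x | (ℓ x + 1)⁻¹ • x ∈ Q ∧ 0 ≤ ℓ x} := by
  ext x
  refine ⟨fun hx => ⟨(himage ▸ Set.mem_image_of_mem _ hx).1, hP x hx⟩, ?_⟩
  rintro ⟨hxQ, hx⟩
  have hx1 : 0 < ℓ x + 1 := by linarith
  obtain ⟨y, hy, hyx⟩ : (ℓ x + 1)⁻¹ • x ∈ (fun x => (ℓ x + 1)⁻¹ • x) '' P :=
    himage ▸ ⟨hxQ, apply_inv_add_one_smul_lt_one ℓ hx1⟩
  have hy1 : 0 < ℓ y + 1 := by linarith [hP y hy]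
  rwa [← injOn_inv_add_one_smul ℓ hy1.ne' hx1.ne' hyx]

end ProjectiveMap

theorem mP_le_card {d : ℕ} {ι : Type*} [Fintype ι] {P : Set (Fin d → ℝ)}
    (q : ι → MvPolynomial (Fin d) ℝ) (hP : P = {x | ∀ i, 0 ≤ MvPolynomial.eval x (q i)}) :
    mP d P ≤ Fintype.card ι :=
  Nat.sInf_le ⟨q ∘ (Fintype.equivFin ι).symm, by
    rw [hP]; ext x; exact ((Fintype.equivFin ι).symm.forall_congr_right).symm⟩

theorem projective_representation_general (d : ℕ) (ι : Type) [Fintype ι]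
    (P : Set (Fin d → ℝ))
    (c : Fin d → ℝ)
    (hc : ∀ x ∈ P, x ≠ 0 → 0 < ∑ j, c j * x j)
    (f : (Fin d → ℝ) → (Fin d → ℝ))
    (hf : ∀ x, f x = ((∑ j, c j * x j) + 1)⁻¹ • x)
    (p : ι → MvPolynomial (Fin d) ℝ)
    (hfP : f '' P = {x | (∀ i, 0 ≤ MvPolynomial.eval x (p i)) ∧ ∑ j, c j * x j < 1}) :
    (∃ (pt : ι → MvPolynomial (Fin d) ℝ) (k : ι → ℕ),
      (∀ i, ∀ x : Fin d → ℝ, 0 < (∑ j, c j * x j) + 1 →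
        MvPolynomial.eval x (pt i) =
          ((∑ j, c j * x j) + 1) ^ k i * MvPolynomial.eval (f x) (p i)) ∧
      P = {x | (∀ i, 0 ≤ MvPolynomial.eval x (pt i)) ∧ 0 ≤ ∑ j, c j * x j}) ∧
    mP d P ≤ Fintype.card ι + 1 := by
  set ℓ := dotProductBilin ℝ ℝ c
  set L : MvPolynomial (Fin d) ℝ := ∑ j, MvPolynomial.C (c j) * MvPolynomial.X j
  set pt := fun i => (p i).homogenizeWith (L + 1)
  have hL : ∀ x, MvPolynomial.eval x L = ℓ x := fun x => by simp [L, ℓ, dotProduct]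
  have hf' : ∀ x, f x = (ℓ x + 1)⁻¹ • x := hf
  have hpt : ∀ i x, 0 < ℓ x + 1 → MvPolynomial.eval x (pt i) =
      (ℓ x + 1) ^ (p i).totalDegree * MvPolynomial.eval (f x) (p i) := fun i x hx => by
    rw [MvPolynomial.eval_homogenizeWith _ _ (by simpa [hL] using hx.ne')]
    simp [hL, hf']
  have hnonneg : ∀ x ∈ P, 0 ≤ ℓ x := fun x hx => by
    rcases eq_or_ne x 0 with rfl | hx0
    exacts [by simp, (hc x hx hx0).le]
  have hrep : P = {x | (∀ i, 0 ≤ MvPolynomial.eval x (pt i)) ∧ 0 ≤ ℓ x} := by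
    rw [eq_setOf_of_image_inv_add_one_smul_eq ℓ hnonneg (funext hf' ▸ hfP)]
    ext x
    refine and_congr_left fun hx => forall_congr' fun i => ?_
    rw [hpt i x (by linarith), hf', mul_nonneg_iff_of_pos_left (pow_pos (by linarith) _)]
  refine ⟨⟨pt, _, hpt, hrep⟩, ?_⟩
  rw [← Fintype.card_option]
  exact mP_le_card (fun o => o.elim L pt) <| by
    rw [hrep]; ext x; simp [Option.forall, hL, and_comm]

/-- Let `P ⊂ ℝ^d` be a pointed polyhedron with a vertex at the origin and
`⟨c,x⟩ > 0` on `P \ {0}`.  If the image of `P` under the projective map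
`f(x) = x/(⟨c,x⟩+1)` is `{x : pᵢ(x) ≥ 0 (i ∈ I), ⟨c,x⟩ < 1}`, then there are
polynomials `p̃ᵢ`, obtained by multiplying `pᵢ(f(x))` by suitable powers of
`⟨c,x⟩+1`, with `P = {x : p̃ᵢ(x) ≥ 0 (i ∈ I), ⟨c,x⟩ ≥ 0}`.
In particular `m_P(P) ≤ |I| + 1`. -/
theorem projective_representation (d : ℕ) (ι : Type) [Fintype ι]
    (P : Set (Fin d → ℝ))
    (hpoly : ∃ (m : ℕ) (a : Fin m → Fin d → ℝ) (b : Fin m → ℝ),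
      P = {x | ∀ i, ∑ j, a i j * x j ≤ b i})
    (hfull : (interior P).Nonempty)
    (h0 : (0 : Fin d → ℝ) ∈ P)
    (h0vert : (0 : Fin d → ℝ) ∈ Set.extremePoints ℝ P)
    (c : Fin d → ℝ)
    (hc : ∀ x ∈ P, x ≠ 0 → 0 < ∑ j, c j * x j)
    (f : (Fin d → ℝ) → (Fin d → ℝ))
    (hf : ∀ x, f x = ((∑ j, c j * x j) + 1)⁻¹ • x)
    (p : ι → MvPolynomial (Fin d) ℝ)
    (hfP : f '' P = {x | (∀ i, 0 ≤ MvPolynomial.eval x (p i)) ∧ ∑ j, c j * x j < 1}) :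
    (∃ (pt : ι → MvPolynomial (Fin d) ℝ) (k : ι → ℕ),
      (∀ i, ∀ x : Fin d → ℝ, 0 < (∑ j, c j * x j) + 1 →
        MvPolynomial.eval x (pt i) =
          ((∑ j, c j * x j) + 1) ^ k i * MvPolynomial.eval (f x) (p i)) ∧
      P = {x | (∀ i, 0 ≤ MvPolynomial.eval x (pt i)) ∧ 0 ≤ ∑ j, c j * x j}) ∧
    mP d P ≤ Fintype.card ι + 1 :=
  projective_representation_general d ι P c hc f hf p hfP
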